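/- Define $M(0)=01$, $M(1)=10$ extended to infinite binary sequences by concatenation, and define $\sup\nolimits^0(i_1i_2\cdots) = \sup\{i_ni_{n+1}\cdots : n \ge 1, i_n = 0\}$ (the lexicographic supremum over all tails beginning with 0). Then for every binary sequence $\mathbf{u}$ starting with the digit 0, $\sup\nolimits^0(M(\mathbf{u})) = M(\sup\nolimits^0(\mathbf{u}))$. -/

import Mathlib

def lexLe (u v : ℕ → Bool) : Prop :=
  u = v ∨ ∃ n, (∀ k < n, u k = v k) ∧ u n < v n

def lexLt (u v : ℕ → Bool) : Prop :=
  ∃ n, (∀ k < n, u k = v k) ∧ u n < v n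

def shiftSeq (n : ℕ) (u : ℕ → Bool) : ℕ → Bool := fun k => u (n + k)

def consSeq (d : Bool) (u : ℕ → Bool) : ℕ → Bool :=
  fun k => match k with
  | 0 => d
  | k + 1 => u k

def prependSeq (m : ℕ) (d : Bool) (u : ℕ → Bool) : ℕ → Bool :=
  fun n => if n < m then d else u (n - m)

def Lsub : Bool → List Bool := fun b => cond b [true, false] [false]

def Msub : Bool → List Bool := fun b => cond b [true, false] [false, true]

def Rsub : Bool → List Bool := fun b => cond b [true] [false, true]

/-- The image of an infinite sequence under a substitution (letterwise
concatenation); the `n`-th letter is well defined as soon as each letter image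
is nonempty. -/
def subSeq (σ : Bool → List Bool) (u : ℕ → Bool) : ℕ → Bool :=
  fun n => (((List.range (n + 1)).map (fun j => σ (u j))).flatten).getD n false

/-- The set of tails of `u` beginning with the digit `0`. -/
def tails0 (u : ℕ → Bool) : Set (ℕ → Bool) := {v | ∃ n, u n = false ∧ v = shiftSeq n u}

/-- `s` is the least upper bound of `A` for the lexicographic order. -/
def isLexLUB (A : Set (ℕ → Bool)) (s : ℕ → Bool) : Prop :=
  (∀ a ∈ A, lexLe a s) ∧ ∀ t, (∀ a ∈ A, lexLe a t) → lexLe s t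

/-!
`M` reads `u` at double speed: `M(u)` has `u k` at position `2k` and `¬ u k` at `2k + 1`. Hence
`M` is strictly monotone and maps the tail of `u` at `k` to the tail of `M(u)` at `2k`. A `0`-tail
of `M(u)` at an odd position `2k + 1` is `0·M(w)` with `w` the tail of `u` at `k + 1`; it lies
below `M(tail_p u) ≤ M(sup⁰ u)` for the last zero `p ≤ k` of `u`, because `0·M(w) < M(0·w)` and
`0·w ≤ tail_p u` (as `x ≤ 1·x` for every `x`). So `M(sup⁰ u)` bounds every `0`-tail of `M(u)`.
It is the least bound because every prefix of `sup⁰ u` is a prefix of some `0`-tail of `u`, whose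
image is a `0`-tail of `M(u)` sharing the doubled prefix with `M(sup⁰ u)`.
-/

section LexOrder

variable {u v w : ℕ → Bool}

theorem lexLe_iff_toLex_le : lexLe u v ↔ toLex u ≤ toLex v := by
  rw [le_iff_lt_or_eq, lexLe, or_comm]
  exact or_congr Iff.rfl toLex_inj.symm

theorem lexLe_refl (u : ℕ → Bool) : lexLe u u := Or.inl rfl

theorem lexLe_trans (huv : lexLe u v) (hvw : lexLe v w) : lexLe u w := by
  rw [lexLe_iff_toLex_le] at *
  exact huv.trans hvw

theorem lexLe_of_lexLt (h : lexLt u v) : lexLe u v := Or.inr h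

theorem lexLt_of_not_lexLe (h : ¬ lexLe u v) : lexLt v u := by
  rw [lexLe_iff_toLex_le] at h
  exact lt_of_not_ge h

theorem not_lexLe_of_lexLt (h : lexLt u v) : ¬ lexLe v u := by
  rw [lexLe_iff_toLex_le]
  exact not_le_of_gt h

theorem exists_le_lt_of_lexLe_of_ne {k : ℕ} (h : lexLe u v) (hne : u k ≠ v k) :
    ∃ d ≤ k, (∀ i < d, u i = v i) ∧ u d < v d := by
  rcases h with rfl | ⟨d, hd, hlt⟩
  · exact absurd rfl hne
  · exact ⟨d, le_of_not_gt fun hkd => hne (hd k hkd), hd, hlt⟩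

theorem lexLe_of_eqOn_of_eq_true {n : ℕ} (h : ∀ k < n, u k = v k)
    (hv : ∀ k, n ≤ k → v k = true) : lexLe u v := by
  by_contra hle
  obtain ⟨d, -, hlt⟩ := lexLt_of_not_lexLe hle
  rcases lt_or_ge d n with hd | hd
  · exact lt_irrefl _ (h d hd ▸ hlt)
  · simp [hv d hd, Bool.lt_iff] at hlt

theorem exists_mem_eqOn_of_isLexLUB {A : Set (ℕ → Bool)} {s : ℕ → Bool} (hA : A.Nonempty)
    (hs : isLexLUB A s) : ∀ n, ∃ a ∈ A, ∀ k < n, a k = s k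
  | 0 => hA.elim fun a ha => ⟨a, ha, fun _ hk => absurd hk (Nat.not_lt_zero _)⟩
  | n + 1 => by
    obtain ⟨a, ha, hagree⟩ := exists_mem_eqOn_of_isLexLUB hA hs n
    by_contra! hnone
    have hlt_at : ∀ b ∈ A, (∀ k < n, b k = s k) → b n < s n := by
      intro b hb hbs
      obtain ⟨k, hk, hne⟩ := hnone b hb
      obtain ⟨d, hdk, -, hlt⟩ := exists_le_lt_of_lexLe_of_ne (hs.1 b hb) hne
      obtain rfl : d = n := by
        by_contra hdn
        exact lt_irrefl _ (hbs d (by omega) ▸ hlt)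
      exact hlt
    -- `t` is the largest sequence below `s` that differs from it first at position `n`.
    let t : ℕ → Bool := fun j => if j < n then s j else if j = n then false else true
    have ht : ∀ b ∈ A, lexLe b t := by
      intro b hb
      by_cases hbs : ∀ k < n, b k = s k
      · refine lexLe_of_eqOn_of_eq_true (n := n + 1) (fun k hk => ?_) fun k hk => ?_
        · rcases Nat.lt_succ_iff_lt_or_eq.mp hk with hk | rfl
          · simp [t, hk, hbs k hk]
          · simpa [t] using (Bool.lt_iff.mp (hlt_at b hb hbs)).1
        · simp [t, show ¬ k < n by omega, show k ≠ n by omega]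
      · push Not at hbs
        obtain ⟨k, hk, hne⟩ := hbs
        obtain ⟨d, hdk, hd, hlt⟩ := exists_le_lt_of_lexLe_of_ne (hs.1 b hb) hne
        exact lexLe_of_lexLt ⟨d, fun i hi => by simp [t, hd i hi, show i < n by omega],
          by simpa [t, show d < n by omega] using hlt⟩
    have hsn := (Bool.lt_iff.mp (hlt_at a ha hagree)).2
    exact not_lexLe_of_lexLt ⟨n, fun k hk => by simp [t, hk], by simp [t, hsn]⟩ (hs.2 t ht)

end LexOrder

section Cons

theorem shiftSeq_eq_consSeq (u : ℕ → Bool) (n : ℕ) :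
    shiftSeq n u = consSeq (u n) (shiftSeq (n + 1) u) := by
  funext k
  cases k with
  | zero => rfl
  | succ k => simp only [shiftSeq, consSeq]; ring_nf

theorem consSeq_lexLe_consSeq (b : Bool) {v w : ℕ → Bool} (h : lexLe v w) :
    lexLe (consSeq b v) (consSeq b w) := by
  rcases h with rfl | ⟨n, hn, hlt⟩
  · exact lexLe_refl _
  · refine lexLe_of_lexLt ⟨n + 1, fun k hk => ?_, hlt⟩
    cases k with
    | zero => rfl
    | succ k => exact hn k (by omega)

theorem eq_of_eqOn_consSeq {b : Bool} {w : ℕ → Bool} {n : ℕ}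
    (h : ∀ k < n, w k = consSeq b w k) : ∀ k < n, w k = b := by
  intro k hk
  induction k with
  | zero => exact h 0 hk
  | succ k ih => exact (h (k + 1) hk).trans (ih (by omega))

theorem consSeq_false_lexLe (w : ℕ → Bool) : lexLe (consSeq false w) w := by
  by_contra hle
  obtain ⟨n, hagree, hlt⟩ := lexLt_of_not_lexLe hle
  rw [Bool.lt_iff] at hlt
  cases n with
  | zero => simp [consSeq] at hlt
  | succ j => simp [consSeq, eq_of_eqOn_consSeq hagree j (by omega)] at hlt

theorem lexLe_consSeq_true (w : ℕ → Bool) : lexLe w (consSeq true w) := by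
  by_contra hle
  obtain ⟨n, hagree, hlt⟩ := lexLt_of_not_lexLe hle
  rw [Bool.lt_iff] at hlt
  cases n with
  | zero => simp [consSeq] at hlt
  | succ j =>
    simp [consSeq, eq_of_eqOn_consSeq (fun k hk => (hagree k hk).symm) j (by omega)] at hlt

end Cons

section Tails

variable {u : ℕ → Bool}

theorem exists_eq_false_shiftSeq_succ_lexLe (h0 : u 0 = false) :
    ∀ k, ∃ p, u p = false ∧ lexLe (shiftSeq (k + 1) u) (shiftSeq (p + 1) u)
  | 0 => ⟨0, h0, lexLe_refl _⟩
  | k + 1 => by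
    obtain ⟨p, hp, hle⟩ := exists_eq_false_shiftSeq_succ_lexLe h0 k
    cases hk : u (k + 1) with
    | false => exact ⟨k + 1, hk, lexLe_refl _⟩
    | true =>
      refine ⟨p, hp, lexLe_trans ?_ hle⟩
      rw [shiftSeq_eq_consSeq u (k + 1), hk]
      exact lexLe_consSeq_true _

theorem exists_mem_tails0_consSeq_false_lexLe (h0 : u 0 = false) (k : ℕ) :
    ∃ v ∈ tails0 u, lexLe (consSeq false (shiftSeq (k + 1) u)) v := by
  obtain ⟨p, hp, hle⟩ := exists_eq_false_shiftSeq_succ_lexLe h0 k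
  refine ⟨shiftSeq p u, ⟨p, hp, rfl⟩, ?_⟩
  rw [shiftSeq_eq_consSeq u p, hp]
  exact consSeq_lexLe_consSeq false hle

end Tails

section UniformSubstitution

variable {σ : Bool → List Bool} {L : ℕ}

theorem length_flatten_map_range (hσ : ∀ b, (σ b).length = L) (u : ℕ → Bool) (n : ℕ) :
    ((List.range n).map fun j => σ (u j)).flatten.length = L * n := by
  induction n with
  | zero => simp
  | succ n ih => simp [List.range_succ, ih, hσ, Nat.mul_succ]

theorem getD_flatten_map_range (hσ : ∀ b, (σ b).length = L) (u : ℕ → Bool) {m n : ℕ}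
    (hm : m < L * n) :
    ((List.range n).map fun j => σ (u j)).flatten.getD m false
      = (σ (u (m / L))).getD (m % L) false := by
  induction n with
  | zero => simp at hm
  | succ n ih =>
    simp only [List.range_succ, List.map_append, List.map_singleton, List.flatten_append,
      List.flatten_singleton]
    rcases lt_or_ge m (L * n) with h | h
    · rw [List.getD_append _ _ _ _ (by rwa [length_flatten_map_range hσ]), ih h]
    · rw [List.getD_append_right _ _ _ _ (by rwa [length_flatten_map_range hσ]),
        length_flatten_map_range hσ, Nat.mod_eq_sub_mul_div,
        Nat.div_eq_of_lt_le (by rwa [mul_comm]) (by rwa [mul_comm])]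

theorem subSeq_apply (hσ : ∀ b, (σ b).length = L) (hL : 0 < L) (u : ℕ → Bool) (m : ℕ) :
    subSeq σ u m = (σ (u (m / L))).getD (m % L) false :=
  getD_flatten_map_range hσ u (by nlinarith)

theorem shiftSeq_mul_subSeq (hσ : ∀ b, (σ b).length = L) (hL : 0 < L) (u : ℕ → Bool) (a : ℕ) :
    shiftSeq (L * a) (subSeq σ u) = subSeq σ (shiftSeq a u) := by
  funext n
  simp only [shiftSeq, subSeq_apply hσ hL, Nat.mul_add_div hL, Nat.mul_add_mod]

theorem subSeq_eq_of_eqOn (hσ : ∀ b, (σ b).length = L) (hL : 0 < L) {v w : ℕ → Bool} {n : ℕ}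
    (h : ∀ k < n, v k = w k) {m : ℕ} (hm : m < L * n) : subSeq σ v m = subSeq σ w m := by
  rw [subSeq_apply hσ hL, subSeq_apply hσ hL, h _ (Nat.div_lt_of_lt_mul hm)]

end UniformSubstitution

section ThueMorse

theorem Msub_length (b : Bool) : (Msub b).length = 2 := by
  cases b <;> rfl

theorem subSeq_Msub_two_mul (u : ℕ → Bool) (k : ℕ) : subSeq Msub u (2 * k) = u k := by
  rw [subSeq_apply Msub_length two_pos]
  simp only [Nat.mul_div_cancel_left k two_pos, Nat.mul_mod_right]
  cases u k <;> rfl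

theorem subSeq_Msub_two_mul_add_one (u : ℕ → Bool) (k : ℕ) :
    subSeq Msub u (2 * k + 1) = !u k := by
  rw [subSeq_apply Msub_length two_pos, Nat.mul_add_div two_pos, Nat.mul_add_mod]
  cases u k <;> rfl

theorem shiftSeq_two_mul_subSeq_Msub (u : ℕ → Bool) (a : ℕ) :
    shiftSeq (2 * a) (subSeq Msub u) = subSeq Msub (shiftSeq a u) :=
  shiftSeq_mul_subSeq Msub_length two_pos u a

theorem shiftSeq_two_mul_add_one_subSeq_Msub (u : ℕ → Bool) (k : ℕ) :
    shiftSeq (2 * k + 1) (subSeq Msub u)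
      = consSeq (!u k) (subSeq Msub (shiftSeq (k + 1) u)) := by
  rw [shiftSeq_eq_consSeq, subSeq_Msub_two_mul_add_one, ← shiftSeq_two_mul_subSeq_Msub]
  rfl

theorem subSeq_Msub_lexLt {v w : ℕ → Bool} (h : lexLt v w) :
    lexLt (subSeq Msub v) (subSeq Msub w) := by
  obtain ⟨n, hn, hlt⟩ := h
  refine ⟨2 * n, fun k hk => subSeq_eq_of_eqOn Msub_length two_pos hn hk, ?_⟩
  rwa [subSeq_Msub_two_mul, subSeq_Msub_two_mul]

theorem subSeq_Msub_lexLe {v w : ℕ → Bool} (h : lexLe v w) :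
    lexLe (subSeq Msub v) (subSeq Msub w) := by
  rcases h with rfl | h
  · exact lexLe_refl _
  · exact lexLe_of_lexLt (subSeq_Msub_lexLt h)

theorem consSeq_false_subSeq_Msub_lexLt (w : ℕ → Bool) :
    lexLt (consSeq false (subSeq Msub w)) (subSeq Msub (consSeq false w)) := by
  have hR0 := subSeq_Msub_two_mul (consSeq false w) 0
  have hR1 := subSeq_Msub_two_mul_add_one (consSeq false w) 0
  have hR2 := subSeq_Msub_two_mul (consSeq false w) 1
  have hL1 := subSeq_Msub_two_mul w 0
  have hL2 := subSeq_Msub_two_mul_add_one w 0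
  simp only [consSeq, mul_zero, zero_add, mul_one, Bool.not_false] at hR0 hR1 hR2 hL1 hL2
  cases hw : w 0
  · refine ⟨1, fun k hk => ?_, by simp [consSeq, hL1, hR1, hw]⟩
    obtain rfl : k = 0 := by omega
    simp [consSeq, hR0]
  · refine ⟨2, fun k hk => ?_, by simp [consSeq, hL2, hR2, hw]⟩
    interval_cases k <;> simp [consSeq, hR0, hR1, hL1, hw]

end ThueMorse

/-- `M` commutes with `sup⁰` on sequences starting with `0`. -/
theorem stmt7 (u s : ℕ → Bool) (h0 : u 0 = false) (hs : isLexLUB (tails0 u) s) :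
    isLexLUB (tails0 (subSeq Msub u)) (subSeq Msub s) := by
  refine ⟨?_, fun t ht => ?_⟩
  · rintro _ ⟨m, hm, rfl⟩
    obtain ⟨k, rfl | rfl⟩ := Nat.even_or_odd' m
    · rw [subSeq_Msub_two_mul] at hm
      rw [shiftSeq_two_mul_subSeq_Msub]
      exact subSeq_Msub_lexLe (hs.1 _ ⟨k, hm, rfl⟩)
    · rw [subSeq_Msub_two_mul_add_one, Bool.not_eq_false'] at hm
      rw [shiftSeq_two_mul_add_one_subSeq_Msub, hm]
      obtain ⟨v, hv, hle⟩ := exists_mem_tails0_consSeq_false_lexLe h0 k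
      exact lexLe_trans (lexLe_of_lexLt (consSeq_false_subSeq_Msub_lexLt _))
        (subSeq_Msub_lexLe (lexLe_trans hle (hs.1 v hv)))
  · by_contra hle
    obtain ⟨n, hagree, hlt⟩ := lexLt_of_not_lexLe hle
    obtain ⟨_, ⟨a, ha, rfl⟩, hpre⟩ :=
      exists_mem_eqOn_of_isLexLUB (A := tails0 u) ⟨_, 0, h0, rfl⟩ hs (n + 1)
    have hM : ∀ k ≤ n, subSeq Msub (shiftSeq a u) k = subSeq Msub s k := fun k hk =>
      subSeq_eq_of_eqOn Msub_length two_pos hpre (by omega)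
    have hmem : subSeq Msub (shiftSeq a u) ∈ tails0 (subSeq Msub u) :=
      ⟨2 * a, by rwa [subSeq_Msub_two_mul], (shiftSeq_two_mul_subSeq_Msub u a).symm⟩
    exact not_lexLe_of_lexLt (u := t) ⟨n, fun k hk => (hagree k hk).trans (hM k hk.le).symm,
      (hM n le_rfl).symm ▸ hlt⟩ (ht _ hmem)
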